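/- arXiv:0709.3411 — 2 statements merged into one kernel-verified Lean document; each statement's English description precedes it below -/
import Mathlib

section
/- Let A ⊆ 2^Ω be a family of sets, λ : A → ℝ, and let K be the convex cone of all finite sums Σ_{n=1}^N a_n(1_{F_n} − λ(F_n)) with a_n ∈ ℝ and F_n ∈ A. Then K contains no sure win (no element ≥ 1 pointwise) if and only if there exists a finitely additive probability m on 2^Ω with m(F) = λ(F) for all F ∈ A. -/
open Filter Set

/-- A positive finitely additive set function on `2^Ω`. -/
structure FinAddMeasure (Ω : Type*) where
  μ : Set Ω → ℝ
  nonneg : ∀ E, 0 ≤ μ E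
  empty : μ ∅ = 0
  add : ∀ E F : Set Ω, Disjoint E F → μ (E ∪ F) = μ E + μ F

/-- A finitely additive probability on `2^Ω`. -/
structure FinAddProb (Ω : Type*) extends FinAddMeasure Ω where
  total : μ Set.univ = 1

/-- Lower (simple-function) sums for `f` relative to a set function `μ` defined
on the sets of the family `A`: sums `∑ aᵢ μ(Eᵢ)` with `aᵢ ≥ 0`, `Eᵢ ∈ A` and
`∑ aᵢ 1_{Eᵢ} ≤ f` pointwise. -/
def lowerSums {Ω : Type*} (A : Set (Set Ω)) (μ : Set Ω → ℝ) (f : Ω → ℝ) : Set ℝ :=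
  { r | ∃ (n : ℕ) (a : Fin n → ℝ) (E : Fin n → Set Ω),
      (∀ i, 0 ≤ a i) ∧ (∀ i, E i ∈ A) ∧
      (∀ ω, (∑ i, a i * (E i).indicator (fun _ => (1 : ℝ)) ω) ≤ f ω) ∧
      r = ∑ i, a i * μ (E i) }

/-- `f` is integrable with respect to `μ` (restricted to the family `A`):
the lower sums of the positive and of the negative part are bounded above. -/
def FAIntegrableOn {Ω : Type*} (A : Set (Set Ω)) (μ : Set Ω → ℝ) (f : Ω → ℝ) : Prop :=
  BddAbove (lowerSums A μ (fun ω => max (f ω) 0)) ∧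
  BddAbove (lowerSums A μ (fun ω => max (-(f ω)) 0))

/-- The finitely additive integral `μ(f) = μ(f⁺) - μ(f⁻)` obtained from lower sums. -/
noncomputable def faIntOn {Ω : Type*} (A : Set (Set Ω)) (μ : Set Ω → ℝ) (f : Ω → ℝ) : ℝ :=
  sSup (lowerSums A μ (fun ω => max (f ω) 0)) -
    sSup (lowerSums A μ (fun ω => max (-(f ω)) 0))

/-- Integrability with respect to a finitely additive measure on all of `2^Ω`. -/
def FAIntegrable {Ω : Type*} (m : FinAddMeasure Ω) (f : Ω → ℝ) : Prop :=
  FAIntegrableOn Set.univ m.μ f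

/-- The integral with respect to a finitely additive measure on all of `2^Ω`. -/
noncomputable def faInt {Ω : Type*} (m : FinAddMeasure Ω) (f : Ω → ℝ) : ℝ :=
  faIntOn Set.univ m.μ f

/-!
If `m` is a finitely additive probability agreeing with `λ` on `A`, every bet `1_F - λ F`
has `m`-mean zero. For a finite combination of bets the mean is a finite sum over the atoms
of the Boolean algebra generated by the `Fₙ`, so the combination cannot be `≥ 1` everywhere.

Conversely, if `K` holds no sure win, the functional `c • 1 + k ↦ c` on `span {1} ⊔ K` is
well defined and nonnegative on nonnegative functions. By the Riesz extension theorem it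
extends to a positive linear functional `g` on the bounded functions (where `1` is an order
unit), and `m E := g 1_E` is a finitely additive probability with `m F = λ F` on `A`.
-/

lemma FinAddMeasure.μ_preimage_finset {Ω β : Type*} (m : FinAddMeasure Ω) (π : Ω → β)
    (T : Finset β) : m.μ (π ⁻¹' T) = ∑ b ∈ T, m.μ (π ⁻¹' {b}) := by
  classical
  induction T using Finset.induction_on with
  | empty => simpa using m.empty
  | insert b T hb ih =>
    rw [Finset.sum_insert hb, ← ih, Finset.coe_insert, Set.insert_eq, Set.preimage_union,
      m.add _ _ ((Set.disjoint_singleton_left.2 hb).preimage π)]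

namespace FinAddProb

variable {Ω β : Type*} [Fintype β] (m : FinAddProb Ω) (π : Ω → β)

lemma sum_μ_preimage_singleton : ∑ b, m.μ (π ⁻¹' {b}) = 1 := by
  rw [← m.μ_preimage_finset, Finset.coe_univ, Set.preimage_univ, m.total]

lemma one_le_sum_μ_preimage_mul {κ : β → ℝ} (h : ∀ ω, 1 ≤ κ (π ω)) :
    1 ≤ ∑ b, m.μ (π ⁻¹' {b}) * κ b := by
  calc 1 = ∑ b, m.μ (π ⁻¹' {b}) := (m.sum_μ_preimage_singleton π).symm
    _ ≤ _ := Finset.sum_le_sum fun b _ => by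
      rcases (π ⁻¹' {b}).eq_empty_or_nonempty with he | ⟨ω, hω⟩
      · simp [he, m.empty]
      · exact le_mul_of_one_le_right (m.nonneg _) (hω ▸ h ω)

end FinAddProb

section Bets

variable {Ω : Type*}

noncomputable def bet (lam : Set Ω → ℝ) (F : Set Ω) (ω : Ω) : ℝ :=
  F.indicator (fun _ => 1) ω - lam F

lemma mem_span_bet_image_iff {A : Set (Set Ω)} {lam : Set Ω → ℝ} {f : Ω → ℝ} :
    f ∈ Submodule.span ℝ (bet lam '' A) ↔
      ∃ (N : ℕ) (a : Fin N → ℝ) (F : Fin N → Set Ω),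
        (∀ i, F i ∈ A) ∧ f = fun ω => ∑ i, a i * bet lam (F i) ω := by
  rw [Submodule.mem_span_set']
  constructor
  · rintro ⟨N, a, g, rfl⟩
    choose F hFA hF using fun i => (g i).2
    exact ⟨N, a, F, hFA, by ext ω; simp [hF]⟩
  · rintro ⟨N, a, F, hFA, rfl⟩
    exact ⟨N, a, fun i => ⟨bet lam (F i), F i, hFA i, rfl⟩, by ext ω; simp⟩

theorem FinAddProb.not_forall_one_le_sum_bet (m : FinAddProb Ω) {N : ℕ} (a : Fin N → ℝ)
    (F : Fin N → Set Ω) : ¬ ∀ ω, 1 ≤ ∑ i, a i * bet m.μ (F i) ω := by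
  classical
  intro hwin
  -- `π ω` is the atom of `ω`; the combination of bets is the function `κ` of the atom.
  let π : Ω → Finset (Fin N) := fun ω => {i | ω ∈ F i}
  let κ : Finset (Fin N) → ℝ := fun s => ∑ i, a i * ((if i ∈ s then 1 else 0) - m.μ (F i))
  have hκ : ∀ ω, κ (π ω) = ∑ i, a i * bet m.μ (F i) ω := fun ω => by
    simp [κ, π, bet, Set.indicator_apply]
  have hF : ∀ i, m.μ (F i) = ∑ s, m.μ (π ⁻¹' {s}) * if i ∈ s then 1 else 0 := by
    intro i
    have hFi : F i = π ⁻¹' ↑({s | i ∈ s} : Finset (Finset (Fin N))) := by ext ω; simp [π]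
    rw [hFi, m.μ_preimage_finset, Finset.sum_filter]
    simp [mul_ite]
  have hmean : ∑ s, m.μ (π ⁻¹' {s}) * κ s = 0 := by
    calc ∑ s, m.μ (π ⁻¹' {s}) * κ s
        = ∑ i, a i * ((∑ s, m.μ (π ⁻¹' {s}) * if i ∈ s then 1 else 0)
            - m.μ (F i) * ∑ s, m.μ (π ⁻¹' {s})) := by
          simp only [κ, Finset.mul_sum, ← Finset.sum_sub_distrib]
          rw [Finset.sum_comm]
          exact Finset.sum_congr rfl fun i _ => Finset.sum_congr rfl fun s _ => by ring
      _ = 0 := by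
          simp only [← hF, m.sum_μ_preimage_singleton, mul_one, sub_self, mul_zero,
            Finset.sum_const_zero]
  linarith [m.one_le_sum_μ_preimage_mul π fun ω => (hκ ω).symm ▸ hwin ω]

theorem FinAddProb.not_exists_sure_win (m : FinAddProb Ω) {A : Set (Set Ω)}
    {lam : Set Ω → ℝ} (hm : ∀ F ∈ A, m.μ F = lam F) :
    ¬ ∃ k ∈ Submodule.span ℝ (bet lam '' A), ∀ ω, 1 ≤ k ω := by
  rintro ⟨k, hk, hwin⟩
  obtain ⟨N, a, F, hFA, rfl⟩ := mem_span_bet_image_iff.1 hk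
  have hbet : ∀ i, bet m.μ (F i) = bet lam (F i) := fun i => by
    ext ω; simp only [bet, hm _ (hFA i)]
  exact m.not_forall_one_le_sum_bet a F fun ω => by simpa only [hbet] using hwin ω

end Bets

theorem exists_nonneg_functional_of_no_sure_win {E : Type*} [AddCommGroup E] [Module ℝ E]
    (s : PointedCone ℝ E) (e : E) (K : Submodule ℝ E)
    (he : ∀ y, ∃ c : ℝ, c • e + y ∈ s) (hK : ∀ k ∈ K, k - e ∉ s) :
    ∃ g : E →ₗ[ℝ] ℝ, g e = 1 ∧ (∀ k ∈ K, g k = 0) ∧ ∀ x ∈ s, 0 ≤ g x := by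
  have heK : e ∉ K := fun h => hK e h (by rw [sub_self]; exact s.zero_mem)
  set f := ((0 : E →ₗ[ℝ] ℝ).toPMap K).supSpanSingleton e 1 heK
  have hf : ∀ x : f.domain, ∃ k ∈ K, ∃ c : ℝ, (x : E) = k + c • e ∧ f x = c := by
    rintro ⟨x, hx⟩
    obtain ⟨k, hk, _, hc, rfl⟩ := Submodule.mem_sup.1 hx
    obtain ⟨c, rfl⟩ := Submodule.mem_span_singleton.1 hc
    exact ⟨k, hk, c, rfl, by simpa using LinearPMap.supSpanSingleton_apply_mk _ e 1 heK k hk c⟩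
  have nonneg : ∀ x : f.domain, (x : E) ∈ s → 0 ≤ f x := by
    intro x hxs
    obtain ⟨k, hk, c, hx, hfx⟩ := hf x
    rw [hfx]
    by_contra! hc
    -- `k + c • e ∈ s` with `c < 0` rescales to the sure win `(-c)⁻¹ • k`.
    refine hK ((-c)⁻¹ • k) (K.smul_mem _ hk) ?_
    convert s.smul_mem (inv_nonneg.2 (neg_nonneg.2 hc.le)) hxs using 1
    rw [hx, smul_add, smul_smul, inv_mul_eq_div, div_neg, div_self hc.ne, neg_one_smul,
      sub_eq_add_neg]
  have dense : ∀ y, ∃ x : f.domain, (x : E) + y ∈ s := fun y =>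
    let ⟨c, hc⟩ := he y
    ⟨⟨c • e, Submodule.mem_sup_right <|
      Submodule.smul_mem _ c (Submodule.mem_span_singleton_self e)⟩, hc⟩
  obtain ⟨g, hgf, hgs⟩ := riesz_extension s f nonneg dense
  refine ⟨g, ?_, fun k hk => ?_, hgs⟩
  · exact (hgf ⟨e, _⟩).trans (LinearPMap.supSpanSingleton_apply_self _ 1 heK)
  · exact (hgf ⟨k, Submodule.mem_sup_left hk⟩).trans
      (LinearPMap.supSpanSingleton_apply_mk_of_mem _ 1 heK hk)

def boundedFunctions (Ω : Type*) : Submodule ℝ (Ω → ℝ) where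
  carrier := {f | ∃ C, ∀ ω, |f ω| ≤ C}
  add_mem' := by
    rintro f g ⟨C, hC⟩ ⟨D, hD⟩
    exact ⟨C + D, fun ω => (abs_add_le _ _).trans (add_le_add (hC ω) (hD ω))⟩
  zero_mem' := ⟨0, by simp⟩
  smul_mem' := by
    rintro c f ⟨C, hC⟩
    exact ⟨|c| * C, fun ω => by
      simpa [abs_mul] using mul_le_mul_of_nonneg_left (hC ω) (abs_nonneg c)⟩

namespace boundedFunctions

variable {Ω : Type*}

noncomputable def indicator (E : Set Ω) : boundedFunctions Ω :=
  ⟨E.indicator fun _ => 1, 1, fun ω => by by_cases h : ω ∈ E <;> simp [h]⟩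

@[simp]
lemma coe_indicator (E : Set Ω) : (indicator E : Ω → ℝ) = E.indicator fun _ => 1 := rfl

lemma indicator_empty : indicator (∅ : Set Ω) = 0 := Subtype.ext (Set.indicator_empty _)

lemma indicator_union_of_disjoint {E F : Set Ω} (h : Disjoint E F) :
    indicator (E ∪ F) = indicator E + indicator F :=
  Subtype.ext (Set.indicator_union_of_disjoint h _)

def nonnegCone : PointedCone ℝ (boundedFunctions Ω) :=
  (PointedCone.positive ℝ (Ω → ℝ)).comap (boundedFunctions Ω).subtype

lemma mem_nonnegCone {f : boundedFunctions Ω} : f ∈ nonnegCone ↔ 0 ≤ (f : Ω → ℝ) :=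
  Iff.rfl

lemma indicator_mem_nonnegCone (E : Set Ω) : indicator E ∈ nonnegCone :=
  mem_nonnegCone.2 (Set.indicator_nonneg fun _ _ => zero_le_one)

lemma exists_smul_indicator_univ_add_mem_nonnegCone (f : boundedFunctions Ω) :
    ∃ c : ℝ, c • indicator univ + f ∈ nonnegCone := by
  obtain ⟨C, hC⟩ := f.2
  exact ⟨C, mem_nonnegCone.2 fun ω => by
    simpa using neg_le_iff_add_nonneg'.1 (neg_le_of_abs_le (hC ω))⟩

end boundedFunctions

section PositiveFunctional

open boundedFunctions

variable {Ω : Type*}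

noncomputable def FinAddProb.ofFunctional (g : boundedFunctions Ω →ₗ[ℝ] ℝ)
    (hg : ∀ f ∈ nonnegCone, 0 ≤ g f) (huniv : g (indicator univ) = 1) : FinAddProb Ω where
  μ E := g (indicator E)
  nonneg E := hg _ (indicator_mem_nonnegCone E)
  empty := by rw [indicator_empty, map_zero]
  add E F h := by rw [indicator_union_of_disjoint h, map_add]
  total := huniv

lemma bet_eq_coe (lam : Set Ω → ℝ) (F : Set Ω) :
    bet lam F = ((indicator F - lam F • indicator univ : boundedFunctions Ω) : Ω → ℝ) := by
  ext ω
  simp [bet]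

theorem exists_finAddProb_of_no_sure_win (A : Set (Set Ω)) (lam : Set Ω → ℝ)
    (h : ¬ ∃ k ∈ Submodule.span ℝ (bet lam '' A), ∀ ω, 1 ≤ k ω) :
    ∃ m : FinAddProb Ω, ∀ F ∈ A, m.μ F = lam F := by
  obtain ⟨g, hg_univ, hg_bet, hg_nonneg⟩ :=
    exists_nonneg_functional_of_no_sure_win nonnegCone (indicator univ) 
      ((Submodule.span ℝ (bet lam '' A)).comap (boundedFunctions Ω).subtype)
      exists_smul_indicator_univ_add_mem_nonnegCone fun k hk hwin => by
        refine h ⟨k, hk, fun ω => ?_⟩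
        simpa [mem_nonnegCone] using hwin ω
  refine ⟨.ofFunctional g hg_nonneg hg_univ, fun F hF => ?_⟩
  have hgF := hg_bet (indicator F - lam F • indicator univ) <| by
    rw [Submodule.mem_comap, Submodule.subtype_apply, ← bet_eq_coe]
    exact Submodule.subset_span (mem_image_of_mem _ hF)
  rw [map_sub, map_smul, hg_univ, smul_eq_mul, mul_one, sub_eq_zero] at hgF
  exact hgF

end PositiveFunctional

theorem de_finetti_coherence_general {Ω : Type*}
    (A : Set (Set Ω)) (lam : Set Ω → ℝ)
    (K : Set (Ω → ℝ))
    (hK : K = { f | ∃ (N : ℕ) (a : Fin N → ℝ) (F : Fin N → Set Ω),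
        (∀ i, F i ∈ A) ∧
        f = fun ω => ∑ i, a i * ((F i).indicator (fun _ => (1 : ℝ)) ω - lam (F i)) }) :
    (¬ ∃ k ∈ K, ∀ ω, (1 : ℝ) ≤ k ω) ↔
    (∃ m : FinAddProb Ω, ∀ F ∈ A, m.μ F = lam F) := by
  obtain rfl : K = Submodule.span ℝ (bet lam '' A) :=
    hK.trans (Set.ext fun f => mem_span_bet_image_iff.symm)
  exact ⟨exists_finAddProb_of_no_sure_win A lam, fun ⟨m, hm⟩ => m.not_exists_sure_win hm⟩

/-- let `A ⊆ 2^Ω`, `lam : A → ℝ`, and let `K` be the convex cone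
(indeed linear span) of finite sums `∑ aₙ (1_{Fₙ} - lam Fₙ)` with `Fₙ ∈ A`.
Then `K` has no sure win iff some finitely additive probability `m` on `2^Ω`
agrees with `lam` on `A`. -/
theorem de_finetti_coherence {Ω : Type*} [Nonempty Ω]
    (A : Set (Set Ω)) (lam : Set Ω → ℝ)
    (K : Set (Ω → ℝ))
    (hK : K = { f | ∃ (N : ℕ) (a : Fin N → ℝ) (F : Fin N → Set Ω),
        (∀ i, F i ∈ A) ∧
        f = fun ω => ∑ i, a i * ((F i).indicator (fun _ => (1 : ℝ)) ω - lam (F i)) }) :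
    (¬ ∃ k ∈ K, ∀ ω, (1 : ℝ) ≤ k ω) ↔
    (∃ m : FinAddProb Ω, ∀ F ∈ A, m.μ F = lam F) :=
  de_finetti_coherence_general A lam K hK
end

section
/- Let m be a finitely additive probability on 2^Ω and define A = {E ⊆ Ω : inf{m(g) : g ∈ L, g ≥ 1_E} = sup{m(f) : f ∈ L, f ≤ 1_E}}, where L is a vector sublattice of L(m) containing 1 such that lim_n m(f_n) = 0 for every sequence in L decreasing pointwise to 0. Then for every decreasing sequence (E_n) in A with ⋂_n E_n = ∅ one has lim_n m(E_n) = 0; that is, m restricted to the algebra A is countably additive. -/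
open Filter Set

open Topology

/-! Pick `f_n ≤ 1_{E_n} ≤ g_n` in `L` with `0 ≤ f_n` and `m(g_n) - m(f_n)` summably
small, and let `h_n = min(f_0, …, f_n)`, which decreases pointwise to `0`. Outside
`D_i = {g_i - f_i ≥ 1/2}` every point of `E_n ⊆ E_i` has `f_i > 1/2`, so
`E_n ⊆ {h_n ≥ 1/2} ∪ ⋃_{i ≤ n} D_i`. Markov's inequality together with the superadditivity
`m(f_i) + m(g_i - f_i) ≤ m(g_i)` of the lower integral gives
`m(E_n) / 2 ≤ m(h_n) + ∑_{i ≤ n} (m(g_i) - m(f_i))`, and `m(h_n) → 0` by the Daniell condition. -/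

section

variable {Ω : Type*}

namespace FinAddMeasure

theorem mono (m : FinAddMeasure Ω) {E F : Set Ω} (h : E ⊆ F) : m.μ E ≤ m.μ F := by
  have := m.add E (F \ E) disjoint_sdiff_right
  rw [union_sdiff_cancel h] at this
  linarith [m.nonneg (F \ E)]

theorem union_le (m : FinAddMeasure Ω) (E F : Set Ω) : m.μ (E ∪ F) ≤ m.μ E + m.μ F := by
  rw [← union_sdiff_self, m.add E (F \ E) disjoint_sdiff_right]
  linarith [m.mono (sdiff_subset : F \ E ⊆ F)]

theorem biUnion_le {ι : Type*} (m : FinAddMeasure Ω) (s : Finset ι) (D : ι → Set Ω) :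
    m.μ (⋃ i ∈ s, D i) ≤ ∑ i ∈ s, m.μ (D i) := by
  classical
  induction s using Finset.induction_on with
  | empty => simp [m.empty]
  | insert i s hi ih =>
    rw [Finset.set_biUnion_insert, Finset.sum_insert hi]
    linarith [m.union_le (D i) (⋃ j ∈ s, D j)]

end FinAddMeasure

section LowerSums

variable {A : Set (Set Ω)} {μ : Set Ω → ℝ}

theorem lowerSums_mono {f g : Ω → ℝ} (h : f ≤ g) : lowerSums A μ f ⊆ lowerSums A μ g := by
  rintro r ⟨n, a, E, ha, hE, hsum, rfl⟩
  exact ⟨n, a, E, ha, hE, fun ω => (hsum ω).trans (h ω), rfl⟩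

theorem zero_mem_lowerSums {f : Ω → ℝ} (hf : 0 ≤ f) : (0 : ℝ) ∈ lowerSums A μ f :=
  ⟨0, Fin.elim0, Fin.elim0, Fin.rec0, Fin.rec0, fun ω => by simpa using hf ω, by simp⟩

theorem mul_mem_lowerSums {f : Ω → ℝ} {E : Set Ω} {c : ℝ} (hE : E ∈ A) (hc : 0 ≤ c)
    (hcf : ∀ ω, c * E.indicator (fun _ => 1) ω ≤ f ω) : c * μ E ∈ lowerSums A μ f :=
  ⟨1, fun _ => c, fun _ => E, fun _ => hc, fun _ => hE, fun ω => by simpa using hcf ω, by simp⟩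

theorem add_mem_lowerSums {u v : Ω → ℝ} {r s : ℝ} (hr : r ∈ lowerSums A μ u)
    (hs : s ∈ lowerSums A μ v) : r + s ∈ lowerSums A μ (u + v) := by
  obtain ⟨n, a, E, ha, hE, hsum, rfl⟩ := hr
  obtain ⟨p, b, F, hb, hF, hsum', rfl⟩ := hs
  refine ⟨n + p, Fin.append a b, Fin.append E F, Fin.addCases (by simpa) (by simpa),
    Fin.addCases (by simpa) (by simpa), fun ω => ?_, ?_⟩ <;>
  simp only [Fin.sum_univ_add, Fin.append_left, Fin.append_right]
  exact add_le_add (hsum ω) (hsum' ω)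

theorem lowerSums_zero (hμ : μ ∅ = 0) : lowerSums A μ (fun _ => 0) = {0} := by
  refine eq_singleton_iff_unique_mem.2 ⟨zero_mem_lowerSums le_rfl, ?_⟩
  rintro r ⟨n, a, E, ha, -, hsum, rfl⟩
  refine Finset.sum_eq_zero fun i _ => ?_
  rcases (E i).eq_empty_or_nonempty with hEi | ⟨ω, hω⟩
  · rw [hEi, hμ, mul_zero]
  · have hterm : ∀ j ∈ Finset.univ, 0 ≤ a j * (E j).indicator (fun _ => (1 : ℝ)) ω :=
      fun j _ => mul_nonneg (ha j) (indicator_nonneg (fun _ _ => zero_le_one) ω)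
    have hai : a i ≤ 0 := by
      simpa [hω] using (Finset.single_le_sum hterm (Finset.mem_univ i)).trans (hsum ω)
    rw [le_antisymm hai (ha i), zero_mul]

end LowerSums

section FAIntegral

variable (m : FinAddMeasure Ω) {f g : Ω → ℝ}

theorem faInt_of_nonneg (hf : 0 ≤ f) : faInt m f = sSup (lowerSums univ m.μ f) := by
  have hpos : (fun ω => max (f ω) 0) = f := funext fun ω => max_eq_left (hf ω)
  have hneg : (fun ω => max (-f ω) 0) = fun _ => 0 :=
    funext fun ω => max_eq_right (neg_nonpos.2 (hf ω))
  rw [faInt, faIntOn, hpos, hneg, lowerSums_zero m.empty, csSup_singleton, sub_zero]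

variable {m}

theorem FAIntegrable.bddAbove_lowerSums (hf : FAIntegrable m f) :
    BddAbove (lowerSums univ m.μ f) :=
  hf.1.mono (lowerSums_mono fun _ => le_max_left _ _)

theorem FAIntegrable.of_nonneg_of_le (hf : 0 ≤ f) (hfg : f ≤ g) (hg : FAIntegrable m g) :
    FAIntegrable m f :=
  ⟨hg.1.mono (lowerSums_mono fun ω => max_le_max (hfg ω) le_rfl),
    hg.2.mono (lowerSums_mono fun ω =>
      max_le ((neg_nonpos.2 (hf ω)).trans (le_max_right _ _)) (le_max_right _ _))⟩

theorem faInt_le_faInt_posPart (hf : FAIntegrable m f) :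
    faInt m f ≤ faInt m (fun ω => max (f ω) 0) := by
  rw [faInt_of_nonneg m (f := fun ω => max (f ω) 0) fun ω => le_max_right _ _, faInt, faIntOn]
  exact sub_le_self _ (le_csSup hf.2 (zero_mem_lowerSums fun ω => le_max_right _ _))

theorem mul_measure_le_faInt (hf0 : 0 ≤ f) (hf : FAIntegrable m f) {c : ℝ} (hc : 0 ≤ c) :
    c * m.μ {ω | c ≤ f ω} ≤ faInt m f := by
  rw [faInt_of_nonneg m hf0]
  refine le_csSup hf.bddAbove_lowerSums (mul_mem_lowerSums (mem_univ _) hc fun ω => ?_)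
  by_cases hω : c ≤ f ω
  · simp [hω]
  · simpa [hω] using hf0 ω

theorem faInt_add_faInt_le {u v : Ω → ℝ} (hu : 0 ≤ u) (hv : 0 ≤ v)
    (huv : FAIntegrable m (u + v)) : faInt m u + faInt m v ≤ faInt m (u + v) := by
  rw [faInt_of_nonneg m hu, faInt_of_nonneg m hv, faInt_of_nonneg m (add_nonneg hu hv)]
  have hbdd := huv.bddAbove_lowerSums
  have hu' : (lowerSums univ m.μ u).Nonempty := ⟨0, zero_mem_lowerSums hu⟩
  have hv' : (lowerSums univ m.μ v).Nonempty := ⟨0, zero_mem_lowerSums hv⟩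
  rw [← csSup_add hu' (hbdd.mono (lowerSums_mono (le_add_of_nonneg_right hv)))
    hv' (hbdd.mono (lowerSums_mono (le_add_of_nonneg_left hu)))]
  exact csSup_le_csSup hbdd (hu'.add hv')
    (Set.add_subset_iff.2 fun _ hr _ hs => add_mem_lowerSums hr hs)

theorem mul_measure_le_faInt_sub (hf : 0 ≤ f) (hfg : f ≤ g) (hg : FAIntegrable m g) {c : ℝ}
    (hc : 0 ≤ c) : c * m.μ {ω | c ≤ g ω - f ω} ≤ faInt m g - faInt m f := by
  have hgf : 0 ≤ g - f := sub_nonneg.2 hfg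
  have hmarkov : c * m.μ {ω | c ≤ g ω - f ω} ≤ faInt m (g - f) :=
    mul_measure_le_faInt hgf (hg.of_nonneg_of_le hgf (sub_le_self g hf)) hc
  have hsuper := faInt_add_faInt_le hf hgf (by rwa [add_sub_cancel])
  rw [add_sub_cancel] at hsuper
  linarith

end FAIntegral

section RunningMin

def runningMin (f : ℕ → Ω → ℝ) : ℕ → Ω → ℝ
  | 0 => f 0
  | n + 1 => fun ω => min (runningMin f n ω) (f (n + 1) ω)

variable {f : ℕ → Ω → ℝ}

theorem runningMin_succ_le (n : ℕ) (ω : Ω) : runningMin f (n + 1) ω ≤ runningMin f n ω :=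
  min_le_left _ _

theorem runningMin_le {i n : ℕ} (h : i ≤ n) (ω : Ω) : runningMin f n ω ≤ f i ω := by
  induction n with
  | zero => rw [Nat.le_zero.1 h]; rfl
  | succ n ih =>
    rcases h.lt_or_eq with h | rfl
    · exact (runningMin_succ_le n ω).trans (ih (Nat.lt_succ_iff.1 h))
    · exact min_le_right _ _

theorem le_runningMin {n : ℕ} {ω : Ω} {c : ℝ} (h : ∀ i ≤ n, c ≤ f i ω) :
    c ≤ runningMin f n ω := by
  induction n with
  | zero => exact h 0 le_rfl
  | succ n ih => exact le_min (ih fun i hi => h i (hi.trans n.le_succ)) (h (n + 1) le_rfl)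

theorem runningMin_mem {L : Set (Ω → ℝ)}
    (hmin : ∀ f ∈ L, ∀ g ∈ L, (fun ω => min (f ω) (g ω)) ∈ L) (hf : ∀ n, f n ∈ L) (n : ℕ) :
    runningMin f n ∈ L := by
  induction n with
  | zero => exact hf 0
  | succ n ih => exact hmin _ ih _ (hf (n + 1))

theorem tendsto_runningMin_zero {ω : Ω} (hf : ∀ i, 0 ≤ f i ω) {N : ℕ} (hN : f N ω ≤ 0) :
    Tendsto (fun n => runningMin f n ω) atTop (𝓝 0) :=
  tendsto_atTop_of_eventually_const fun _ hn =>
    le_antisymm ((runningMin_le hn ω).trans hN) (le_runningMin fun i _ => hf i)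

end RunningMin

theorem min_mem_of_smul_mem_of_max_mem {L : Set (Ω → ℝ)}
    (hsmul : ∀ (c : ℝ), ∀ f ∈ L, c • f ∈ L)
    (hmax : ∀ f ∈ L, ∀ g ∈ L, (fun ω => max (f ω) (g ω)) ∈ L)
    {f g : Ω → ℝ} (hf : f ∈ L) (hg : g ∈ L) : (fun ω => min (f ω) (g ω)) ∈ L := by
  convert hsmul (-1) _ (hmax _ (hsmul (-1) f hf) _ (hsmul (-1) g hg)) using 1
  funext ω
  simp [max_neg_neg]

theorem exists_lt_add_of_sInf_eq_sSup {L : Set (Ω → ℝ)} (I : (Ω → ℝ) → ℝ) {E : Set Ω}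
    (h0 : (fun _ => (0 : ℝ)) ∈ L) (h1 : (fun _ => (1 : ℝ)) ∈ L)
    (hE : sInf {r : ℝ | ∃ g ∈ L, (∀ ω, E.indicator (fun _ => (1 : ℝ)) ω ≤ g ω) ∧ r = I g} =
      sSup {r : ℝ | ∃ f ∈ L, (∀ ω, f ω ≤ E.indicator (fun _ => (1 : ℝ)) ω) ∧ r = I f})
    {ε : ℝ} (hε : 0 < ε) :
    ∃ f ∈ L, ∃ g ∈ L, f ≤ E.indicator (fun _ => 1) ∧ E.indicator (fun _ => 1) ≤ g ∧
      I g < I f + ε := by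
  have hind0 : 0 ≤ E.indicator (fun _ => (1 : ℝ)) := indicator_nonneg fun _ _ => zero_le_one
  have hind1 : E.indicator (fun _ => (1 : ℝ)) ≤ fun _ => 1 :=
    indicator_le_self' fun _ _ => zero_le_one
  have hupper : I (fun _ => 1) ∈
      {r : ℝ | ∃ g ∈ L, (∀ ω, E.indicator (fun _ => (1 : ℝ)) ω ≤ g ω) ∧ r = I g} :=
    ⟨_, h1, hind1, rfl⟩
  have hlower : I (fun _ => 0) ∈
      {r : ℝ | ∃ f ∈ L, (∀ ω, f ω ≤ E.indicator (fun _ => (1 : ℝ)) ω) ∧ r = I f} :=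
    ⟨_, h0, hind0, rfl⟩
  obtain ⟨_, ⟨g, hgL, hEg, rfl⟩, hg⟩ := Real.lt_sInf_add_pos ⟨_, hupper⟩ (half_pos hε)
  obtain ⟨_, ⟨f, hfL, hfE, rfl⟩, hf⟩ :=
    Real.add_neg_lt_sSup ⟨_, hlower⟩ (neg_lt_zero.2 (half_pos hε))
  exact ⟨f, hfL, g, hgL, hfE, hEg, by linarith⟩

theorem subset_setOf_runningMin_union {E : ℕ → Set Ω} {f g : ℕ → Ω → ℝ} (hE : Antitone E)
    (hEg : ∀ i, (E i).indicator (fun _ => (1 : ℝ)) ≤ g i) (n : ℕ) :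
    E n ⊆ {ω | 1 / 2 ≤ runningMin f n ω} ∪
      ⋃ i ∈ Finset.range (n + 1), {ω | 1 / 2 ≤ g i ω - f i ω} := by
  intro ω hω
  by_cases hbad : ∃ i ∈ Finset.range (n + 1), 1 / 2 ≤ g i ω - f i ω
  · obtain ⟨i, hi, hgf⟩ := hbad
    exact Or.inr (mem_biUnion hi hgf)
  · push Not at hbad
    refine Or.inl (le_runningMin fun i hi => ?_)
    have hgi : 1 ≤ g i ω := by
      simpa [hE hi hω] using hEg i ω
    linarith [hbad i (Finset.mem_range_succ_iff.2 hi)]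

theorem half_measure_le_faInt_runningMin_add_sum (m : FinAddMeasure Ω) {E : ℕ → Set Ω}
    {f g : ℕ → Ω → ℝ} (hE : Antitone E) (hf0 : ∀ i, 0 ≤ f i)
    (hfE : ∀ i, f i ≤ (E i).indicator (fun _ => 1)) (hEg : ∀ i, (E i).indicator (fun _ => 1) ≤ g i)
    (hg : ∀ i, FAIntegrable m (g i)) (hmin : ∀ n, FAIntegrable m (runningMin f n)) (n : ℕ) :
    1 / 2 * m.μ (E n) ≤
      faInt m (runningMin f n) + ∑ i ∈ Finset.range (n + 1), (faInt m (g i) - faInt m (f i)) := by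
  have hmin0 : 0 ≤ runningMin f n := fun _ => le_runningMin fun i _ => hf0 i _
  have hcover : m.μ (E n) ≤ m.μ {ω | 1 / 2 ≤ runningMin f n ω} +
      ∑ i ∈ Finset.range (n + 1), m.μ {ω | 1 / 2 ≤ g i ω - f i ω} :=
    (m.mono (subset_setOf_runningMin_union hE hEg n)).trans <|
      (m.union_le _ _).trans (add_le_add_right (m.biUnion_le _ _) _)
  calc 1 / 2 * m.μ (E n)
      ≤ 1 / 2 * m.μ {ω | 1 / 2 ≤ runningMin f n ω} +
          ∑ i ∈ Finset.range (n + 1), 1 / 2 * m.μ {ω | 1 / 2 ≤ g i ω - f i ω} := by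
        rw [← Finset.mul_sum]; linarith
    _ ≤ _ := add_le_add (mul_measure_le_faInt hmin0 (hmin n) (by norm_num))
        (Finset.sum_le_sum fun i _ =>
          mul_measure_le_faInt_sub (hf0 i) ((hfE i).trans (hEg i)) (hg i) (by norm_num))

theorem exists_nonneg_sandwich (m : FinAddMeasure Ω) {L : Set (Ω → ℝ)}
    (hLint : ∀ f ∈ L, FAIntegrable m f)
    (hLsup : ∀ f ∈ L, ∀ g ∈ L, (fun ω => max (f ω) (g ω)) ∈ L)
    (h0 : (fun _ => (0 : ℝ)) ∈ L) (h1 : (fun _ => (1 : ℝ)) ∈ L) {E : Set Ω}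
    (hE : sInf {r : ℝ | ∃ g ∈ L, (∀ ω, E.indicator (fun _ => (1 : ℝ)) ω ≤ g ω) ∧
        r = faInt m g} =
      sSup {r : ℝ | ∃ f ∈ L, (∀ ω, f ω ≤ E.indicator (fun _ => (1 : ℝ)) ω) ∧ r = faInt m f})
    {ε : ℝ} (hε : 0 < ε) :
    ∃ f ∈ L, ∃ g ∈ L, 0 ≤ f ∧ f ≤ E.indicator (fun _ => 1) ∧ E.indicator (fun _ => 1) ≤ g ∧
      faInt m g - faInt m f < ε := by
  obtain ⟨f, hfL, g, hgL, hfE, hEg, hgap⟩ := exists_lt_add_of_sInf_eq_sSup (faInt m) h0 h1 hE hε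
  refine ⟨fun ω => max (f ω) 0, hLsup _ hfL _ h0, g, hgL, fun ω => le_max_right _ _,
    fun ω => max_le (hfE ω) (indicator_nonneg (fun _ _ => zero_le_one) ω), hEg, ?_⟩
  linarith [faInt_le_faInt_posPart (hLint f hfL)]

end

theorem restriction_countably_additive_general {Ω : Type*}
    (m : FinAddProb Ω)
    (L : Set (Ω → ℝ))
    (hLint : ∀ f ∈ L, FAIntegrable m.toFinAddMeasure f)
    (hLsmul : ∀ (c : ℝ), ∀ f ∈ L, c • f ∈ L)
    (hLsup : ∀ f ∈ L, ∀ g ∈ L, (fun ω => max (f ω) (g ω)) ∈ L)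
    (h1 : (fun _ => (1 : ℝ)) ∈ L)
    (hdaniell : ∀ fs : ℕ → Ω → ℝ, (∀ n, fs n ∈ L) →
        (∀ n ω, fs (n + 1) ω ≤ fs n ω) →
        (∀ ω, Filter.Tendsto (fun n => fs n ω) Filter.atTop (nhds 0)) →
        Filter.Tendsto (fun n => faInt m.toFinAddMeasure (fs n))
          Filter.atTop (nhds 0)) :
    ∀ E : ℕ → Set Ω,
      (∀ n, E n ∈ {E : Set Ω |
        sInf {r : ℝ | ∃ g ∈ L, (∀ ω, E.indicator (fun _ => (1 : ℝ)) ω ≤ g ω) ∧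
            r = faInt m.toFinAddMeasure g} =
        sSup {r : ℝ | ∃ f ∈ L, (∀ ω, f ω ≤ E.indicator (fun _ => (1 : ℝ)) ω) ∧
            r = faInt m.toFinAddMeasure f}}) →
      (∀ n, E (n + 1) ⊆ E n) → (⋂ n, E n) = ∅ →
      Filter.Tendsto (fun n => m.μ (E n)) Filter.atTop (nhds 0) := by
  intro E hEA hEanti hEempty
  have h0 : (fun _ => (0 : ℝ)) ∈ L := by simpa [Pi.zero_def] using hLsmul 0 _ h1
  refine tendsto_order.2 ⟨fun a ha => .of_forall fun n => ha.trans_le (m.nonneg _), fun ε hε => ?_⟩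
  choose f hfL g hgL hf0 hfE hEg hgap using fun n =>
    exists_nonneg_sandwich m.toFinAddMeasure hLint hLsup h0 h1 (hEA n)
      (show 0 < ε / 8 * (1 / 2) ^ n by positivity)
  have hmin : ∀ n, runningMin f n ∈ L :=
    runningMin_mem (fun _ hf _ hg => min_mem_of_smul_mem_of_max_mem hLsmul hLsup hf hg) hfL
  have hlim := hdaniell _ hmin runningMin_succ_le fun ω => by
    obtain ⟨N, hN⟩ : ∃ N, ω ∉ E N := by
      simpa using (hEempty ▸ notMem_empty ω : ω ∉ ⋂ n, E n)
    exact tendsto_runningMin_zero (fun i => hf0 i ω) (by simpa [hN] using hfE N ω)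
  filter_upwards [(tendsto_order.1 hlim).2 (ε / 4) (by positivity)] with n hn
  have hgeom : ∑ i ∈ Finset.range (n + 1), (faInt m.toFinAddMeasure (g i) -
      faInt m.toFinAddMeasure (f i)) ≤ ε / 4 := calc
    _ ≤ ∑ i ∈ Finset.range (n + 1), ε / 8 * (1 / 2) ^ i :=
      Finset.sum_le_sum fun i _ => (hgap i).le
    _ = ε / 8 * ∑ i ∈ Finset.range (n + 1), (1 / 2 : ℝ) ^ i := (Finset.mul_sum ..).symm
    _ ≤ ε / 8 * 2 := by gcongr; exact sum_geometric_two_le _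
    _ = ε / 4 := by ring
  have hbound := half_measure_le_faInt_runningMin_add_sum m.toFinAddMeasure
    (antitone_nat_of_succ_le hEanti) hf0 hfE hEg (fun i => hLint _ (hgL i))
    (fun k => hLint _ (hmin k)) n
  linarith

/-- with `m` a finitely additive probability on `2^Ω` and `L` a
vector sublattice of `L(m)` containing `1` such that `m(f_n) → 0` along every
sequence in `L` decreasing pointwise to `0`, the family
`A = {E : inf{m(g) : g ∈ L, g ≥ 1_E} = sup{m(f) : f ∈ L, f ≤ 1_E}}` satisfies:
for every decreasing sequence `(E_n)` in `A` with empty intersection,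
`m(E_n) → 0`; i.e. `m` restricted to `A` is countably additive. -/
theorem restriction_countably_additive {Ω : Type*} [Nonempty Ω]
    (m : FinAddProb Ω)
    (L : Set (Ω → ℝ))
    (hLint : ∀ f ∈ L, FAIntegrable m.toFinAddMeasure f)
    (hLadd : ∀ f ∈ L, ∀ g ∈ L, f + g ∈ L)
    (hLsmul : ∀ (c : ℝ), ∀ f ∈ L, c • f ∈ L)
    (hLsup : ∀ f ∈ L, ∀ g ∈ L, (fun ω => max (f ω) (g ω)) ∈ L)
    (h1 : (fun _ => (1 : ℝ)) ∈ L)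
    (hdaniell : ∀ fs : ℕ → Ω → ℝ, (∀ n, fs n ∈ L) →
        (∀ n ω, fs (n + 1) ω ≤ fs n ω) →
        (∀ ω, Filter.Tendsto (fun n => fs n ω) Filter.atTop (nhds 0)) →
        Filter.Tendsto (fun n => faInt m.toFinAddMeasure (fs n))
          Filter.atTop (nhds 0)) :
    ∀ E : ℕ → Set Ω,
      (∀ n, E n ∈ {E : Set Ω |
        sInf {r : ℝ | ∃ g ∈ L, (∀ ω, E.indicator (fun _ => (1 : ℝ)) ω ≤ g ω) ∧
            r = faInt m.toFinAddMeasure g} =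
        sSup {r : ℝ | ∃ f ∈ L, (∀ ω, f ω ≤ E.indicator (fun _ => (1 : ℝ)) ω) ∧
            r = faInt m.toFinAddMeasure f}}) →
      (∀ n, E (n + 1) ⊆ E n) → (⋂ n, E n) = ∅ →
      Filter.Tendsto (fun n => m.μ (E n)) Filter.atTop (nhds 0) :=
  restriction_countably_additive_general m L hLint hLsmul hLsup h1 hdaniell
end
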